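/- arXiv:2102.13068 — 3 statements merged into one kernel-verified Lean document; each statement's English description precedes it below -/
import Mathlib

section
/- Let f : ℝ^d → ℝ be m-strongly convex and L-smooth with minimizer x* and condition number κ = L/m. Let K ⊆ ℝ^d be a convex body with B(x*, r) ⊆ K ⊆ B(x*, R) for some 0 < r < R. Then for every x ∈ K, the warmness ratio of the truncated Gaussian start over the target satisfies [exp(−(L/2)‖x − x*‖²) / ∫_K exp(−(L/2)‖z − x*‖²) dz] · [∫_K exp(−f(z)) dz / exp(−f(x))] ≤ ∫_{B(x*,R)} exp(−(m/2)‖z − x*‖²) dz / ∫_{B(x*,r)} exp(−(L/2)‖z − x*‖²) dz. -/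
open MeasureTheory Real Set


-- strong convexity lower bound at a global min
lemma sc_lower {E : Type*} [NormedAddCommGroup E] [InnerProductSpace ℝ E]
    {m : ℝ} {f : E → ℝ} (hsc : StrongConvexOn Set.univ m f)
    {a : E} (hmin : ∀ x, f a ≤ f x) (z : E) :
    f a + m / 2 * ‖z - a‖ ^ 2 ≤ f z := by
  have key : ∀ᶠ t in nhdsWithin (0:ℝ) (Set.Ioi 0),
      (1 - t) * (m / 2 * ‖z - a‖ ^ 2) ≤ f z - f a := by
    filter_upwards [Ioo_mem_nhdsGT_of_mem (by constructor <;> norm_num :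
        (0:ℝ) ∈ Set.Ico 0 1)] with t ht
    have h2 := hsc.2 (Set.mem_univ z) (Set.mem_univ a)
        (le_of_lt ht.1) (by linarith [ht.2] : (0:ℝ) ≤ 1 - t) (by ring)
    have h3 := hmin (t • z + (1 - t) • a)
    simp only [smul_eq_mul] at h2
    nlinarith [ht.1, h2, h3]
  have hT : Filter.Tendsto (fun t : ℝ => (1 - t) * (m / 2 * ‖z - a‖ ^ 2))
      (nhdsWithin (0:ℝ) (Set.Ioi 0)) (nhds (m / 2 * ‖z - a‖ ^ 2)) := by
    have hc : Continuous (fun t : ℝ => (1 - t) * (m / 2 * ‖z - a‖ ^ 2)) := by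
      continuity
    have := hc.tendsto (0:ℝ)
    simp only [sub_zero, one_mul] at this
    exact this.mono_left nhdsWithin_le_nhds
  have := le_of_tendsto hT key
  linarith


local notation "⟪" x ", " y "⟫" => @inner ℝ _ _ x y

lemma descent {E : Type*} [NormedAddCommGroup E] [InnerProductSpace ℝ E] [CompleteSpace E]
    {L : ℝ} {f : E → ℝ} (hdiff : Differentiable ℝ f)
    (hsmooth : ∀ x y : E, ‖gradient f x - gradient f y‖ ≤ L * ‖x - y‖)
    {a : E} (hmin : ∀ x, f a ≤ f x) (x : E) :
    f x ≤ f a + L / 2 * ‖x - a‖ ^ 2 := by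
  have hga : gradient f a = 0 := by
    have hloc : IsLocalMin f a := Filter.Eventually.of_forall hmin
    have h1 : HasGradientAt f (gradient f a) a := (hdiff a).hasGradientAt
    have h2 := hasGradientAt_iff_hasFDerivAt.mp h1
    have h3 := hloc.hasFDerivAt_eq_zero h2
    have := congrArg (fun g => (InnerProductSpace.toDual ℝ E).symm g) h3
    simpa [gradient] using this
  set h : E := x - a with hh
  set φ : ℝ → ℝ := fun t => L / 2 * t ^ 2 * ‖h‖ ^ 2 - f (a + t • h) with hφ
  have hder : ∀ t : ℝ, HasDerivAt φ
      (L * t * ‖h‖ ^ 2 - ⟪gradient f (a + t • h), h⟫) t := by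
    intro t
    have hc : HasDerivAt (fun t : ℝ => a + t • h) h t := by
      simpa using ((hasDerivAt_id t).smul_const h).const_add a
    have hg : HasGradientAt f (gradient f (a + t • h)) (a + t • h) :=
      (hdiff _).hasGradientAt
    have hfd := hasGradientAt_iff_hasFDerivAt.mp hg
    have hcomp := hfd.comp_hasDerivAt t hc
    have hq : HasDerivAt (fun t : ℝ => L / 2 * t ^ 2 * ‖h‖ ^ 2) (L * t * ‖h‖ ^ 2) t := by
      have := ((hasDerivAt_pow 2 t).const_mul (L / 2)).mul_const (‖h‖ ^ 2)
      refine this.congr_deriv ?_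
      ring
    have := hq.sub hcomp
    simp [InnerProductSpace.toDual_apply_apply] at this ⊢
    exact this
  have hmono : MonotoneOn φ (Set.Icc 0 1) := by
    apply monotoneOn_of_deriv_nonneg (convex_Icc 0 1)
    · exact (fun t _ => ((hder t).differentiableAt).continuousAt.continuousWithinAt)
    · intro t ht
      exact ((hder t).differentiableAt).differentiableWithinAt
    · intro t ht
      rw [(hder t).deriv]
      rw [interior_Icc] at ht
      have hz : ⟪gradient f (a + t • h), h⟫
          = ⟪gradient f (a + t • h) - gradient f a, h⟫ := by
        rw [hga]; simp
      have hb : ⟪gradient f (a + t • h) - gradient f a, h⟫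
          ≤ ‖gradient f (a + t • h) - gradient f a‖ * ‖h‖ := real_inner_le_norm _ _
      have hl := hsmooth (a + t • h) a
      have ht0 : (0:ℝ) ≤ t := le_of_lt ht.1
      have hts : ‖a + t • h - a‖ = t * ‖h‖ := by
        simp [norm_smul, abs_of_nonneg ht0]
      rw [hts] at hl
      have hn : (0:ℝ) ≤ ‖h‖ := norm_nonneg _
      nlinarith [norm_nonneg (gradient f (a + t • h) - gradient f a)]
  have h01 := hmono (Set.mem_Icc.mpr ⟨le_refl 0, zero_le_one⟩)
    (Set.mem_Icc.mpr ⟨zero_le_one, le_refl 1⟩) zero_le_one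
  simp only [hφ] at h01
  have e0 : a + (0:ℝ) • h = a := by simp
  have e1 : a + (1:ℝ) • h = x := by simp [hh]
  rw [e0, e1] at h01
  simp at h01
  linarith


/-- Warmness of the truncated Gaussian start `N_K(x*, (1/L) I_d)` with
respect to the target `π ∝ exp (-f)` on a convex body `K` sandwiched between balls
`B(x*, r) ⊆ K ⊆ B(x*, R)`. -/
theorem stmt1 (d : ℕ) (m L r R : ℝ) (hm : 0 < m) (hmL : m ≤ L)
    (f : EuclideanSpace ℝ (Fin d) → ℝ) (hdiff : Differentiable ℝ f)
    (hsc : StrongConvexOn Set.univ m f)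
    (hsmooth : ∀ x y : EuclideanSpace ℝ (Fin d),
      ‖gradient f x - gradient f y‖ ≤ L * ‖x - y‖)
    (xstar : EuclideanSpace ℝ (Fin d)) (hmin : ∀ x, f xstar ≤ f x)
    (K : Set (EuclideanSpace ℝ (Fin d)))
    (hKconv : Convex ℝ K) (hKcomp : IsCompact K)
    (hr : 0 < r) (hrR : r < R)
    (hball₁ : Metric.closedBall xstar r ⊆ K)
    (hball₂ : K ⊆ Metric.closedBall xstar R)
    (x : EuclideanSpace ℝ (Fin d)) (hx : x ∈ K) :
    (Real.exp (-(L / 2) * ‖x - xstar‖ ^ 2) /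
        ∫ z in K, Real.exp (-(L / 2) * ‖z - xstar‖ ^ 2)) *
      ((∫ z in K, Real.exp (-f z)) / Real.exp (-f x)) ≤
    (∫ z in Metric.closedBall xstar R, Real.exp (-(m / 2) * ‖z - xstar‖ ^ 2)) /
      (∫ z in Metric.closedBall xstar r, Real.exp (-(L / 2) * ‖z - xstar‖ ^ 2)) := by
  have hsc' : ∀ z, f xstar + m / 2 * ‖z - xstar‖ ^ 2 ≤ f z := sc_lower hsc hmin
  have hdesc : f x ≤ f xstar + L / 2 * ‖x - xstar‖ ^ 2 := descent hdiff hsmooth hmin x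
  have hL : 0 < L := lt_of_lt_of_le hm hmL
  have cL : Continuous fun z : EuclideanSpace ℝ (Fin d) =>
      Real.exp (-(L / 2) * ‖z - xstar‖ ^ 2) := by fun_prop
  have cm : Continuous fun z : EuclideanSpace ℝ (Fin d) =>
      Real.exp (-(m / 2) * ‖z - xstar‖ ^ 2) := by fun_prop
  have cf : Continuous fun z : EuclideanSpace ℝ (Fin d) => Real.exp (-f z) :=
    (hdiff.continuous.neg).rexp
  set A := ∫ z in K, Real.exp (-(L / 2) * ‖z - xstar‖ ^ 2) with hA
  set Bq := ∫ z in K, Real.exp (-f z) with hB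
  set N := ∫ z in Metric.closedBall xstar R, Real.exp (-(m / 2) * ‖z - xstar‖ ^ 2) with hN
  set D := ∫ z in Metric.closedBall xstar r, Real.exp (-(L / 2) * ‖z - xstar‖ ^ 2) with hD
  have intK_L : IntegrableOn (fun z => Real.exp (-(L / 2) * ‖z - xstar‖ ^ 2)) K :=
    cL.continuousOn.integrableOn_compact hKcomp
  have intK_m : IntegrableOn (fun z => Real.exp (-(m / 2) * ‖z - xstar‖ ^ 2)) K :=
    cm.continuousOn.integrableOn_compact hKcomp
  have intK_f : IntegrableOn (fun z => Real.exp (-f z)) K :=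
    cf.continuousOn.integrableOn_compact hKcomp
  have intR_m : IntegrableOn (fun z => Real.exp (-(m / 2) * ‖z - xstar‖ ^ 2))
      (Metric.closedBall xstar R) :=
    cm.continuousOn.integrableOn_compact (isCompact_closedBall _ _)
  -- positivity of D
  have hDpos : 0 < D := by
    have hconst : Real.exp (-(L / 2) * r ^ 2) * (volume (Metric.closedBall xstar r)).toReal
        ≤ D := by
      apply setIntegral_ge_of_const_le_real measurableSet_closedBall
        (measure_closedBall_lt_top.ne)
      · intro z hz
        have : ‖z - xstar‖ ≤ r := by
          rw [← dist_eq_norm]; exact hz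
        apply Real.exp_le_exp.mpr
        nlinarith [mul_le_mul this this (norm_nonneg (z - xstar)) hr.le, hL]
      · exact cL.continuousOn.integrableOn_compact (isCompact_closedBall _ _)
    have hvol : 0 < (volume (Metric.closedBall xstar r)).toReal := by
      apply ENNReal.toReal_pos
      · exact (Metric.measure_closedBall_pos volume xstar hr).ne'
      · exact measure_closedBall_lt_top.ne
    nlinarith [Real.exp_pos (-(L / 2) * r ^ 2)]
  have hDA : D ≤ A := by
    apply setIntegral_mono_set intK_L
    · exact Filter.Eventually.of_forall (fun z => (Real.exp_pos _).le)
    · exact Filter.Eventually.of_forall hball₁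
  have hApos : 0 < A := lt_of_lt_of_le hDpos hDA
  have hNnonneg : 0 ≤ N :=
    setIntegral_nonneg measurableSet_closedBall (fun z _ => (Real.exp_pos _).le)
  have hBnonneg : 0 ≤ Bq :=
    setIntegral_nonneg hKcomp.isClosed.measurableSet (fun z _ => (Real.exp_pos _).le)
  -- Bq ≤ exp(-f x*) * N
  have hBN : Bq ≤ Real.exp (-f xstar) * N := by
    have step1 : Bq ≤ ∫ z in K,
        Real.exp (-f xstar) * Real.exp (-(m / 2) * ‖z - xstar‖ ^ 2) := by
      apply setIntegral_mono_on intK_f (intK_m.const_mul _) hKcomp.isClosed.measurableSet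
      intro z _
      rw [← Real.exp_add]
      apply Real.exp_le_exp.mpr
      have := hsc' z
      linarith
    have step2 : (∫ z in K, Real.exp (-f xstar) * Real.exp (-(m / 2) * ‖z - xstar‖ ^ 2))
        = Real.exp (-f xstar) * ∫ z in K, Real.exp (-(m / 2) * ‖z - xstar‖ ^ 2) :=
      integral_const_mul _ _
    have step3 : (∫ z in K, Real.exp (-(m / 2) * ‖z - xstar‖ ^ 2)) ≤ N := by
      apply setIntegral_mono_set intR_m
      · exact Filter.Eventually.of_forall (fun z => (Real.exp_pos _).le)
      · exact Filter.Eventually.of_forall hball₂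
    calc Bq ≤ _ := step1
      _ = _ := step2
      _ ≤ Real.exp (-f xstar) * N := by
          exact mul_le_mul_of_nonneg_left step3 (Real.exp_pos _).le
  -- pointwise bound
  have hpt : Real.exp (-(L / 2) * ‖x - xstar‖ ^ 2)
      ≤ Real.exp (f xstar) * Real.exp (-f x) := by
    rw [← Real.exp_add]
    apply Real.exp_le_exp.mpr
    linarith
  set e₁ := Real.exp (-(L / 2) * ‖x - xstar‖ ^ 2)
  set e₂ := Real.exp (-f x)
  have he₂ : 0 < e₂ := Real.exp_pos _
  have key : e₁ * Bq ≤ e₂ * N := by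
    calc e₁ * Bq ≤ (Real.exp (f xstar) * e₂) * (Real.exp (-f xstar) * N) :=
          mul_le_mul hpt hBN hBnonneg (by positivity)
      _ = (Real.exp (f xstar) * Real.exp (-f xstar)) * (e₂ * N) := by ring
      _ = e₂ * N := by rw [← Real.exp_add]; simp
  have : e₁ / A * (Bq / e₂) = (e₁ * Bq) / (A * e₂) := by
    field_simp
  rw [this]
  have h2 : (e₁ * Bq) / (A * e₂) ≤ (e₂ * N) / (e₂ * D) := by
    apply div_le_div₀ (by positivity) key (by positivity)
    rw [mul_comm e₂ D]
    exact mul_le_mul_of_nonneg_right hDA he₂.le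
  calc (e₁ * Bq) / (A * e₂) ≤ (e₂ * N) / (e₂ * D) := h2
    _ = N / D := mul_div_mul_left _ _ he₂.ne'
end

section
/- Let f : ℝ^d → ℝ be m-strongly convex and L-smooth with minimizer x*, let z ∈ ℝ^d with ‖x* − z‖ ≤ δ for some δ > 0, and let Λ ≥ L. Let K ⊆ ℝ^d be a convex body with B(z, r) ⊆ K ⊆ B(z, R) for some 0 < r < R. Then for every x ∈ K, [exp(−Λ‖x − z‖²) / ∫_K exp(−Λ‖w − z‖²) dw] · [∫_K exp(−f(w)) dw / exp(−f(x))] ≤ exp((Λ + m/2)δ²) · ∫_{B(z,R)} exp(−(m/4)‖w − z‖²) dw / ∫_{B(z,r)} exp(−Λ‖w − z‖²) dw. -/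
open MeasureTheory Real Set

variable {d : ℕ}

-- gradient zero at global min
lemma grad_zero (f : EuclideanSpace ℝ (Fin d) → ℝ) (xstar : EuclideanSpace ℝ (Fin d))
    (hmin : ∀ x, f xstar ≤ f x) : gradient f xstar = 0 := by
  have h : IsLocalMin f xstar := Filter.Eventually.of_forall hmin
  rw [gradient, h.fderiv_eq_zero, map_zero]

-- strong convexity lower bound at minimizer
lemma sc_bound (m : ℝ) (f : EuclideanSpace ℝ (Fin d) → ℝ)
    (hsc : StrongConvexOn Set.univ m f)
    (xstar : EuclideanSpace ℝ (Fin d)) (hmin : ∀ x, f xstar ≤ f x)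
    (w : EuclideanSpace ℝ (Fin d)) :
    f xstar + m / 2 * ‖w - xstar‖ ^ 2 ≤ f w := by
  set c : ℝ := m / 2 * ‖w - xstar‖ ^ 2 with hc
  have key : ∀ a ∈ Ioo (0:ℝ) 1, f xstar ≤ f w - (1 - a) * c := by
    intro a ha
    have h2 := hsc.2 (mem_univ w) (mem_univ xstar) ha.1.le (by linarith [ha.2] : (0:ℝ) ≤ 1 - a)
      (by ring)
    have h3 : f xstar ≤ f (a • w + (1 - a) • xstar) := hmin _
    have h4 : f xstar ≤ a * f w + (1 - a) * f xstar - a * (1 - a) * c := by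
      simpa [smul_eq_mul, hc] using h3.trans h2
    have ha0 := ha.1
    nlinarith [h4]
  have ht : Filter.Tendsto (fun a : ℝ => f w - (1 - a) * c) (nhdsWithin 0 (Ioi 0))
      (nhds (f w - (1 - 0) * c)) := by
    apply Filter.Tendsto.mono_left _ nhdsWithin_le_nhds
    exact (continuous_const.sub (((continuous_const.sub continuous_id).mul
      continuous_const))).tendsto 0
  have := ge_of_tendsto ht (by
    filter_upwards [Ioo_mem_nhdsGT_of_mem (by norm_num : (0:ℝ) ∈ Ico (0:ℝ) 1)] with a ha
    exact key a ha)
  norm_num at this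
  linarith

-- smoothness (descent) upper bound at minimizer
lemma smooth_bound (L : ℝ) (hL : 0 ≤ L) (f : EuclideanSpace ℝ (Fin d) → ℝ)
    (hdiff : Differentiable ℝ f)
    (hsmooth : ∀ x y : EuclideanSpace ℝ (Fin d),
      ‖gradient f x - gradient f y‖ ≤ L * ‖x - y‖)
    (xstar : EuclideanSpace ℝ (Fin d)) (hmin : ∀ x, f xstar ≤ f x)
    (x : EuclideanSpace ℝ (Fin d)) :
    f x ≤ f xstar + L / 2 * ‖x - xstar‖ ^ 2 := by
  set v := x - xstar with hv
  set γ : ℝ → EuclideanSpace ℝ (Fin d) := fun t => xstar + t • v with hγ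
  set φ : ℝ → ℝ := fun t => (fderiv ℝ f (γ t)) v with hφ
  have hγcont : Continuous γ := by fun_prop
  have hgradlip : LipschitzWith (Real.toNNReal L) (gradient f) := by
    apply LipschitzWith.of_dist_le_mul
    intro a b
    rw [dist_eq_norm, dist_eq_norm, Real.coe_toNNReal L hL]
    exact hsmooth a b
  have hgradcont : Continuous (gradient f) := hgradlip.continuous
  have hfd : ∀ w : EuclideanSpace ℝ (Fin d), (fderiv ℝ f w) v = (inner ℝ (gradient f w) v : ℝ) := by
    intro w
    rw [gradient]
    simp [InnerProductSpace.toDual_apply_apply]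
  have hφcont : Continuous φ := by
    have : φ = fun t => (inner ℝ (gradient f (γ t)) v : ℝ) := by
      funext t; exact hfd (γ t)
    rw [this]
    exact (hgradcont.comp hγcont).inner continuous_const
  have hderiv : ∀ t ∈ Set.uIcc (0:ℝ) 1, HasDerivAt (fun t => f (γ t)) (φ t) t := by
    intro t _
    have h1 : HasDerivAt γ v t := by
      have : HasDerivAt (fun s : ℝ => s • v) ((1:ℝ) • v) t :=
        (hasDerivAt_id t).smul_const v
      simpa [hγ] using this.const_add xstar
    exact (hdiff (γ t)).hasFDerivAt.comp_hasDerivAt t h1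
  have hFTC : ∫ t in (0:ℝ)..1, φ t = f (γ 1) - f (γ 0) :=
    intervalIntegral.integral_eq_sub_of_hasDerivAt hderiv
      (hφcont.intervalIntegrable 0 1)
  have hgrad0 : gradient f xstar = 0 := grad_zero f xstar hmin
  have hbound : ∀ t ∈ Set.Icc (0:ℝ) 1, φ t ≤ L * ‖v‖ ^ 2 * t := by
    intro t ht
    have h1 : φ t = (inner ℝ (gradient f (γ t) - gradient f xstar) v : ℝ) := by
      rw [hgrad0, sub_zero]; exact hfd (γ t)
    have h2 : (inner ℝ (gradient f (γ t) - gradient f xstar) v : ℝ) ≤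
        ‖gradient f (γ t) - gradient f xstar‖ * ‖v‖ := real_inner_le_norm _ _
    have h3 : ‖gradient f (γ t) - gradient f xstar‖ ≤ L * (t * ‖v‖) := by
      have := hsmooth (γ t) xstar
      simpa [hγ, norm_smul, abs_of_nonneg ht.1] using this
    have hv0 : (0:ℝ) ≤ ‖v‖ := norm_nonneg v
    calc φ t ≤ ‖gradient f (γ t) - gradient f xstar‖ * ‖v‖ := h1 ▸ h2
      _ ≤ L * (t * ‖v‖) * ‖v‖ := by
          apply mul_le_mul_of_nonneg_right h3 hv0
      _ = L * ‖v‖ ^ 2 * t := by ring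
  have hint : ∫ t in (0:ℝ)..1, φ t ≤ ∫ t in (0:ℝ)..1, L * ‖v‖ ^ 2 * t := by
    apply intervalIntegral.integral_mono_on (by norm_num)
      (hφcont.intervalIntegrable 0 1)
      (by apply Continuous.intervalIntegrable; fun_prop)
    exact hbound
  have hval : ∫ t in (0:ℝ)..1, L * ‖v‖ ^ 2 * t = L / 2 * ‖v‖ ^ 2 := by
    rw [intervalIntegral.integral_const_mul, integral_id]
    ring
  have hγ1 : γ 1 = x := by simp [hγ, hv]
  have hγ0 : γ 0 = xstar := by simp [hγ]
  rw [hγ1, hγ0] at hFTC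
  linarith [hFTC ▸ (hint.trans_eq hval)]

set_option maxHeartbeats 1000000 in
/-- Warmness of the proxy start `N_K(z, 1/(2Λ) I_d)` (density
proportional to `exp (-Λ‖x-z‖²)` on `K`) with respect to the target `π ∝ exp (-f)`,
where `z` is within distance `δ` of the minimizer `x*` and `Λ ≥ L`. -/
theorem stmt2 (d : ℕ) (m L Λ δ r R : ℝ) (hm : 0 < m) (hmL : m ≤ L) (hΛ : L ≤ Λ)
    (hδ : 0 < δ)
    (f : EuclideanSpace ℝ (Fin d) → ℝ) (hdiff : Differentiable ℝ f)
    (hsc : StrongConvexOn Set.univ m f)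
    (hsmooth : ∀ x y : EuclideanSpace ℝ (Fin d),
      ‖gradient f x - gradient f y‖ ≤ L * ‖x - y‖)
    (xstar : EuclideanSpace ℝ (Fin d)) (hmin : ∀ x, f xstar ≤ f x)
    (z : EuclideanSpace ℝ (Fin d)) (hz : ‖xstar - z‖ ≤ δ)
    (K : Set (EuclideanSpace ℝ (Fin d)))
    (hKconv : Convex ℝ K) (hKcomp : IsCompact K)
    (hr : 0 < r) (hrR : r < R)
    (hball₁ : Metric.closedBall z r ⊆ K)
    (hball₂ : K ⊆ Metric.closedBall z R)
    (x : EuclideanSpace ℝ (Fin d)) (hx : x ∈ K) :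
    (Real.exp (-Λ * ‖x - z‖ ^ 2) / ∫ w in K, Real.exp (-Λ * ‖w - z‖ ^ 2)) *
      ((∫ w in K, Real.exp (-f w)) / Real.exp (-f x)) ≤
    Real.exp ((Λ + m / 2) * δ ^ 2) *
      ((∫ w in Metric.closedBall z R, Real.exp (-(m / 4) * ‖w - z‖ ^ 2)) /
        (∫ w in Metric.closedBall z r, Real.exp (-Λ * ‖w - z‖ ^ 2))) := by
  have hL0 : (0:ℝ) ≤ L := by linarith
  have hΛ0 : (0:ℝ) ≤ Λ := by linarith
  have hfc : Continuous f := hdiff.continuous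
  -- notation
  set A : ℝ := Real.exp (-Λ * ‖x - z‖ ^ 2) with hA
  set B : ℝ := Real.exp (-f x) with hB
  set N1 : ℝ := ∫ w in K, Real.exp (-Λ * ‖w - z‖ ^ 2) with hN1def
  set N2 : ℝ := ∫ w in K, Real.exp (-f w) with hN2def
  set DR : ℝ := ∫ w in Metric.closedBall z R, Real.exp (-(m / 4) * ‖w - z‖ ^ 2) with hDRdef
  set Dr : ℝ := ∫ w in Metric.closedBall z r, Real.exp (-Λ * ‖w - z‖ ^ 2) with hDrdef
  have hmeasK : MeasurableSet K := hKcomp.isClosed.measurableSet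
  have hcball : ∀ ρ : ℝ, IsCompact (Metric.closedBall z ρ) := fun ρ => isCompact_closedBall z ρ
  have hcontΛ : Continuous fun w : EuclideanSpace ℝ (Fin d) => Real.exp (-Λ * ‖w - z‖ ^ 2) := by
    fun_prop
  have hcontm : Continuous fun w : EuclideanSpace ℝ (Fin d) => Real.exp (-(m/4) * ‖w - z‖ ^ 2) := by
    fun_prop
  have hcontf : Continuous fun w : EuclideanSpace ℝ (Fin d) => Real.exp (-f w) := by fun_prop
  -- positivity of Dr
  have hDr : 0 < Dr := by
    have hsub : ∀ w ∈ Metric.closedBall z r, Real.exp (-Λ * r ^ 2) ≤ Real.exp (-Λ * ‖w - z‖ ^ 2) := by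
      intro w hw
      rw [Metric.mem_closedBall, dist_eq_norm] at hw
      apply Real.exp_le_exp.mpr
      have h1 : ‖w - z‖ ^ 2 ≤ r ^ 2 := by
        apply sq_le_sq' _ hw
        linarith [norm_nonneg (w - z)]
      nlinarith
    have hint : IntegrableOn (fun w => Real.exp (-Λ * ‖w - z‖ ^ 2)) (Metric.closedBall z r) :=
      hcontΛ.continuousOn.integrableOn_compact (hcball r)
    have hge := setIntegral_ge_of_const_le (c := Real.exp (-Λ * r ^ 2))
      measurableSet_closedBall ((hcball r).measure_lt_top).ne hsub hint
    have hvol : 0 < (volume (Metric.closedBall z r)).toReal := by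
      apply ENNReal.toReal_pos _ ((hcball r).measure_lt_top).ne
      refine (lt_of_lt_of_le (Metric.measure_ball_pos volume z hr) (measure_mono Metric.ball_subset_closedBall)).ne'
    calc (0:ℝ) < Real.exp (-Λ * r ^ 2) * (volume (Metric.closedBall z r)).toReal := by positivity
      _ ≤ Dr := by rw [smul_eq_mul, mul_comm] at hge; exact hge
  -- Dr ≤ N1
  have hN1 : Dr ≤ N1 := by
    apply setIntegral_mono_set (hcontΛ.continuousOn.integrableOn_compact hKcomp)
      (Filter.Eventually.of_forall fun w => (Real.exp_pos _).le)
      (HasSubset.Subset.eventuallyLE hball₁)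
  -- DR nonneg (in fact pos, nonneg suffices)
  have hDR0 : 0 ≤ DR := by
    apply setIntegral_nonneg measurableSet_closedBall
    intro w _; exact (Real.exp_pos _).le
  -- N2 nonneg
  have hN20 : 0 ≤ N2 := by
    apply setIntegral_nonneg hmeasK
    intro w _; exact (Real.exp_pos _).le
  -- pointwise bound for N2
  set C : ℝ := Real.exp (-f xstar + m / 2 * δ ^ 2) with hC
  have hptw : ∀ w ∈ K, Real.exp (-f w) ≤ C * Real.exp (-(m/4) * ‖w - z‖ ^ 2) := by
    intro w _
    rw [hC, ← Real.exp_add]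
    apply Real.exp_le_exp.mpr
    have h1 := sc_bound m f hsc xstar hmin w
    have h2 : ‖w - z‖ ≤ ‖w - xstar‖ + ‖xstar - z‖ := by
      calc ‖w - z‖ = ‖(w - xstar) + (xstar - z)‖ := by rw [sub_add_sub_cancel]
        _ ≤ _ := norm_add_le _ _
    have hcsq : ‖w - z‖ ^ 2 ≤ 2 * ‖w - xstar‖ ^ 2 + 2 * δ ^ 2 := by
      nlinarith [mul_self_le_mul_self (norm_nonneg (w - z)) h2,
        mul_self_le_mul_self (norm_nonneg (xstar - z)) hz,
        sq_nonneg (‖w - xstar‖ - ‖xstar - z‖)]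
    have hmul := mul_le_mul_of_nonneg_left hcsq (by positivity : (0:ℝ) ≤ m / 4)
    linarith
  -- N2 ≤ C * DR
  have hN2 : N2 ≤ C * DR := by
    have step1 : N2 ≤ ∫ w in K, C * Real.exp (-(m/4) * ‖w - z‖ ^ 2) := by
      apply setIntegral_mono_on (hcontf.continuousOn.integrableOn_compact hKcomp)
        ((continuous_const.mul hcontm).continuousOn.integrableOn_compact hKcomp) hmeasK hptw
    have step2 : (∫ w in K, C * Real.exp (-(m/4) * ‖w - z‖ ^ 2)) ≤
        ∫ w in Metric.closedBall z R, C * Real.exp (-(m/4) * ‖w - z‖ ^ 2) := by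
      apply setIntegral_mono_set
        ((continuous_const.mul hcontm).continuousOn.integrableOn_compact (hcball R))
        (Filter.Eventually.of_forall fun w => show (0:ℝ) ≤ C * Real.exp (-(m/4) * ‖w - z‖ ^ 2) from mul_nonneg (Real.exp_pos _).le (Real.exp_pos _).le)
        (HasSubset.Subset.eventuallyLE hball₂)
    have step3 : (∫ w in Metric.closedBall z R, C * Real.exp (-(m/4) * ‖w - z‖ ^ 2)) = C * DR := by
      rw [hDRdef, integral_const_mul]
    linarith [step1.trans (step2.trans_eq step3)]
  -- A / B bound
  have hAB : A / B ≤ Real.exp (Λ * δ ^ 2 + f xstar) := by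
    rw [hA, hB, ← Real.exp_sub]
    apply Real.exp_le_exp.mpr
    have h1 := smooth_bound L hL0 f hdiff hsmooth xstar hmin x
    have h2 : ‖x - xstar‖ ≤ ‖x - z‖ + ‖xstar - z‖ := by
      calc ‖x - xstar‖ = ‖(x - z) - (xstar - z)‖ := by rw [sub_sub_sub_cancel_right]
        _ ≤ _ := norm_sub_le _ _
    have hasq : ‖x - xstar‖ ^ 2 ≤ 2 * ‖x - z‖ ^ 2 + 2 * δ ^ 2 := by
      nlinarith [mul_self_le_mul_self (norm_nonneg (x - xstar)) h2,
        mul_self_le_mul_self (norm_nonneg (xstar - z)) hz,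
        sq_nonneg (‖x - z‖ - ‖xstar - z‖)]
    have hmul := mul_le_mul_of_nonneg_left hasq (by positivity : (0:ℝ) ≤ L / 2)
    have hc1 := mul_le_mul_of_nonneg_right hΛ (sq_nonneg ‖x - z‖)
    have hc2 := mul_le_mul_of_nonneg_right hΛ (sq_nonneg δ)
    linarith
  -- combine
  have hBpos : 0 < B := Real.exp_pos _
  have hA0 : 0 ≤ A := (Real.exp_pos _).le
  have hrearr : A / N1 * (N2 / B) = (A / B) * (N2 / N1) := by ring
  have hfrac : N2 / N1 ≤ C * DR / Dr :=
    div_le_div₀ (by positivity) hN2 hDr hN1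
  calc A / N1 * (N2 / B) = (A / B) * (N2 / N1) := hrearr
    _ ≤ Real.exp (Λ * δ ^ 2 + f xstar) * (C * DR / Dr) := by
        apply mul_le_mul hAB hfrac (by positivity) (Real.exp_pos _).le
    _ = (Real.exp (Λ * δ ^ 2 + f xstar) * Real.exp (-f xstar + m / 2 * δ ^ 2)) * (DR / Dr) := by
        rw [hC]; ring
    _ = Real.exp ((Λ + m / 2) * δ ^ 2) * (DR / Dr) := by
        rw [← Real.exp_add]; ring_nf
end

section
/- Let (Ω, ν) be a measure space with σ-finite measure ν, let p : Ω → [0, ∞) be a probability density with respect to ν (∫_Ω p dν = 1), let α : Ω → [0, 1] be measurable, and let x ∈ Ω be a point with ν({x}) = 0. Let P be the probability measure with density p with respect to ν, and let T be the probability measure obtained by Metropolis filtering, i.e. T(A) = ∫_A α·p dν + (1 − ∫_Ω α·p dν)·𝟙{x ∈ A} for measurable A. Then the total variation distance satisfies ‖P − T‖_TV = 1 − ∫_Ω α·p dν. -/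
open MeasureTheory Real Set Classical in

/-- The total variation distance between a proposal distribution with
density `p` and the transition distribution obtained by Metropolis filtering with
acceptance probability `α` (staying at the current atomless point `x₀` upon rejection)
equals `1 - ∫ α·p dν`. -/
theorem stmt10 {Ω : Type*} [MeasurableSpace Ω] (ν : Measure Ω) [SigmaFinite ν]
    (p : Ω → ℝ) (hpmeas : Measurable p) (hp0 : ∀ z, 0 ≤ p z)
    (hpint : Integrable p ν) (hp1 : (∫ z, p z ∂ν) = 1)
    (α : Ω → ℝ) (hαmeas : Measurable α) (hα : ∀ z, α z ∈ Set.Icc (0 : ℝ) 1)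
    (x₀ : Ω) (hx₀ : ν {x₀} = 0)
    (P T : Set Ω → ℝ)
    (hP : ∀ A, P A = ∫ z in A, p z ∂ν)
    (hT : ∀ A, T A = (∫ z in A, α z * p z ∂ν) +
      (1 - ∫ z, α z * p z ∂ν) * (if x₀ ∈ A then 1 else 0)) :
    (⨆ A : {A : Set Ω // MeasurableSet A}, |P A.1 - T A.1|) =
      1 - ∫ z, α z * p z ∂ν := by
  -- integrability of α·p and (1-α)·p
  have hαp_int : Integrable (fun z => α z * p z) ν := by
    refine hpint.mono ((hαmeas.mul hpmeas).aestronglyMeasurable) ?_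
    filter_upwards with z
    simp only [Real.norm_eq_abs, abs_mul, abs_of_nonneg ((hα z).1), abs_of_nonneg (hp0 z)]
    nlinarith [(hα z).2, hp0 z]
  have hf_int : Integrable (fun z => p z - α z * p z) ν := hpint.sub hαp_int
  set c : ℝ := 1 - ∫ z, α z * p z ∂ν with hc
  have hf_nonneg : ∀ z, 0 ≤ p z - α z * p z := by
    intro z
    have : α z * p z ≤ 1 * p z := mul_le_mul_of_nonneg_right (hα z).2 (hp0 z)
    simpa using this
  have hc_eq : (∫ z, (p z - α z * p z) ∂ν) = c := by
    rw [integral_sub hpint hαp_int, hp1]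
  -- value of the difference for measurable A
  have hdiff : ∀ A : Set Ω, MeasurableSet A →
      P A - T A = (∫ z in A, (p z - α z * p z) ∂ν) - c * (if x₀ ∈ A then 1 else 0) := by
    intro A hA
    rw [hP, hT, integral_sub (hpint.integrableOn) (hαp_int.integrableOn)]
    ring
  -- bounds for set integrals
  have hI_bound : ∀ A : Set Ω, MeasurableSet A →
      0 ≤ (∫ z in A, (p z - α z * p z) ∂ν) ∧
      (∫ z in A, (p z - α z * p z) ∂ν) ≤ c := by
    intro A hA
    constructor
    · exact setIntegral_nonneg hA fun z _ => hf_nonneg z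
    · rw [← hc_eq]
      exact setIntegral_le_integral hf_int (Filter.Eventually.of_forall fun z => hf_nonneg z)
  have hbound : ∀ A : Set Ω, MeasurableSet A → |P A - T A| ≤ c := by
    intro A hA
    rw [hdiff A hA]
    rcases hI_bound A hA with ⟨h0, h1⟩
    by_cases hx : x₀ ∈ A <;> simp [hx, abs_le] <;>
      constructor <;> linarith
  -- the supremum is attained at the complement of a measurable null superset of {x₀}
  obtain ⟨B, hB_sub, hBm, hB0⟩ := exists_measurable_superset_of_null hx₀
  have hx₀B : x₀ ∈ B := hB_sub rfl
  have hAval : P Bᶜ - T Bᶜ = c := by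
    rw [hdiff Bᶜ hBm.compl]
    have hx : x₀ ∉ Bᶜ := fun h => h hx₀B
    have hB_int0 : (∫ z in B, (p z - α z * p z) ∂ν) = 0 := by
      rw [Measure.restrict_eq_zero.mpr hB0, integral_zero_measure]
    have hsplit : (∫ z in B, (p z - α z * p z) ∂ν) +
        (∫ z in Bᶜ, (p z - α z * p z) ∂ν) = ∫ z, (p z - α z * p z) ∂ν :=
      integral_add_compl hBm hf_int
    simp [hx, hB_int0] at hsplit ⊢
    linarith [hc_eq]
  have hbdd : BddAbove (Set.range fun A : {A : Set Ω // MeasurableSet A} => |P A.1 - T A.1|) := by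
    refine ⟨c, ?_⟩
    rintro y ⟨A, rfl⟩
    exact hbound A.1 A.2
  apply le_antisymm
  · exact ciSup_le fun A => hbound A.1 A.2
  · have := le_ciSup hbdd (⟨Bᶜ, hBm.compl⟩ : {A : Set Ω // MeasurableSet A})
    rw [hAval] at this
    have hc_nonneg : 0 ≤ c := by
      have := (hI_bound ∅ MeasurableSet.empty)
      rcases this with ⟨h0, h1⟩
      have : (∫ z in (∅ : Set Ω), (p z - α z * p z) ∂ν) = 0 := by simp
      linarith
    calc 1 - ∫ z, α z * p z ∂ν = c := rfl
    _ = |c| := (abs_of_nonneg hc_nonneg).symm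
    _ ≤ _ := by simpa [abs_of_nonneg hc_nonneg] using this
end
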